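/- An irrational x ∈ [0,1] is a Liouville number (for every c > 0 there are infinitely many rationals p/q with |x − p/q| ≤ q^{−c}) if and only if for every c > 0 there exist infinitely many n with log(1 + ω_n) ≥ c ∑_{j=0}^{n−1} log(1 + ω_j), where ω_j are the partial quotients of x. -/

import Mathlib

/-!
Let `q_n` be the convergent denominators of `x`. From the recursion
`q_{n+1} = ω_n q_n + q_{n-1}` one gets `log q_n ≤ S_n ≤ 2 log q_n + log 2`, where
`S_n = ∑_{j<n} log (1 + ω_j)`, and the convergents `p_n / q_n` (in lowest terms) satisfy
`1 / (2 q_n q_{n+1}) < |x - p_n / q_n| < 1 / (q_n q_{n+1})`.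

If `log (1 + ω_n) ≥ c S_n`, then `q_{n+1} ≥ ω_n ≥ q_n ^ c / 2`, so `p_n / q_n` is a
`q_n ^ (-c)`-approximation. If instead `log (1 + ω_n) < c S_n` for all large `n`, then
`log q_{n+1} ≤ 2 (1 + c) log q_n + L` for all `n`. A rational `r` with `q_n ≤ r.den < q_{n+1}` is
at distance at least `1 / (2 r.den q_n q_{n+1})` from `x` (compare it with `p_n / q_n`), hence
at distance at least `r.den ^ (-(2 (1 + c) + 2)) / (2 e^L)`; so only rationals of bounded
denominator are `r.den ^ (-(2 (1 + c) + 3))`-approximations of `x`.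
-/

open Real Set

/-- The Gauss map. -/
noncomputable def gaussMap (x : ℝ) : ℝ := if x = 0 then 0 else 1 / x - ⌊1 / x⌋

/-- The n-th partial quotient of x. -/
noncomputable def cfOmega (x : ℝ) (n : ℕ) : ℕ := (⌊1 / (gaussMap^[n] x)⌋).toNat

/-- (q_{n-1}, q_n) for the convergent denominators of x, with q_{-1} = 0, q_0 = 1. -/
noncomputable def cfQPair (x : ℝ) : ℕ → ℕ × ℕ
  | 0 => (0, 1)
  | n + 1 => ((cfQPair x n).2, cfOmega x n * (cfQPair x n).2 + (cfQPair x n).1)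

/-- The denominator q_n of the n-th convergent of x. -/
noncomputable def cfQ (x : ℝ) (n : ℕ) : ℕ := (cfQPair x n).2

/-- (p_{n-1}, p_n) for the convergent numerators of x, with p_{-1} = 1, p_0 = 0. -/
noncomputable def cfPPair (x : ℝ) : ℕ → ℕ × ℕ
  | 0 => (1, 0)
  | n + 1 => ((cfPPair x n).2, cfOmega x n * (cfPPair x n).2 + (cfPPair x n).1)

/-- The numerator p_n of the n-th convergent of x. -/
noncomputable def cfP (x : ℝ) (n : ℕ) : ℕ := (cfPPair x n).2

lemma gaussMap_eq_fract {y : ℝ} (hy : y ≠ 0) : gaussMap y = Int.fract (1 / y) := by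
  rw [gaussMap, if_neg hy, Int.fract]

lemma irrational_gaussMap {y : ℝ} (hy : Irrational y) : Irrational (gaussMap y) := by
  rw [gaussMap_eq_fract hy.ne_zero, Int.fract, one_div]
  exact hy.inv.sub_intCast _

lemma gaussMap_mem_Ioo {y : ℝ} (hy : Irrational y) : gaussMap y ∈ Ioo 0 1 := by
  rw [gaussMap_eq_fract hy.ne_zero, one_div]
  exact ⟨Int.fract_pos.2 (hy.inv.ne_int _), Int.fract_lt_one _⟩

lemma irrational_iterate_gaussMap {x : ℝ} (hx : Irrational x) : ∀ n, Irrational (gaussMap^[n] x)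
  | 0 => hx
  | n + 1 => by
    rw [Function.iterate_succ_apply']
    exact irrational_gaussMap (irrational_iterate_gaussMap hx n)

lemma iterate_gaussMap_mem_Ioo {x : ℝ} (hx : x ∈ Ioo 0 1) (hirr : Irrational x) :
    ∀ n, gaussMap^[n] x ∈ Ioo 0 1
  | 0 => hx
  | n + 1 => by
    rw [Function.iterate_succ_apply']
    exact gaussMap_mem_Ioo (irrational_iterate_gaussMap hirr n)

lemma Rat.one_div_den_mul_den_le_abs_sub {r s : ℚ} (h : r ≠ s) :
    1 / ((r.den : ℝ) * s.den) ≤ |(r : ℝ) - s| := by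
  have hr : (0 : ℝ) < r.den := by exact_mod_cast r.pos
  have hs : (0 : ℝ) < s.den := by exact_mod_cast s.pos
  have hz : r.num * s.den - s.num * r.den ≠ 0 :=
    sub_ne_zero.2 fun h' => h (Rat.eq_iff_mul_eq_mul.2 h')
  have hdiff : (r : ℝ) - s = ((r.num * s.den - s.num * r.den : ℤ) : ℝ) / (r.den * s.den) := by
    rw [Rat.cast_def r, Rat.cast_def s]
    push_cast
    field_simp
  rw [hdiff, abs_div, abs_of_pos (mul_pos hr hs)]
  gcongr
  exact_mod_cast Int.one_le_abs hz

lemma Rat.finite_setOf_den_le_abs_le (B : ℕ) (R : ℝ) :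
    {r : ℚ | r.den ≤ B ∧ |(r : ℝ)| ≤ R}.Finite := by
  have hinj : Function.Injective fun r : ℚ => (r.num, r.den) := fun r s h =>
    Rat.ext (congrArg Prod.fst h) (congrArg Prod.snd h)
  refine (((Set.finite_Icc (-⌈R * B⌉) ⌈R * B⌉).prod (Set.finite_Iic B)).preimage
    hinj.injOn).subset ?_
  rintro r ⟨hden, hr⟩
  have hnum : |(r.num : ℝ)| ≤ R * B := by
    rw [← Rat.cast_intCast, ← Rat.mul_den_eq_num, Rat.cast_mul, abs_mul, Rat.cast_natCast,
      Nat.abs_cast]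
    exact mul_le_mul hr (by exact_mod_cast hden) (by positivity) ((abs_nonneg _).trans hr)
  refine ⟨abs_le.1 ?_, hden⟩
  exact_mod_cast hnum.trans (Int.le_ceil _)

section ContinuedFraction

variable {x : ℝ}

lemma one_div_iterate_gaussMap (ht : ∀ n, gaussMap^[n] x ∈ Ioo 0 1) (n : ℕ) :
    1 / gaussMap^[n] x = cfOmega x n + gaussMap^[n + 1] x := by
  have htn := ht n
  have hfloor : 0 ≤ ⌊1 / gaussMap^[n] x⌋ :=
    Int.floor_nonneg.2 (one_div_pos.2 htn.1).le
  have hω : (cfOmega x n : ℝ) = ⌊1 / gaussMap^[n] x⌋ := by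
    rw [cfOmega]; exact_mod_cast Int.toNat_of_nonneg hfloor
  rw [Function.iterate_succ_apply', gaussMap_eq_fract htn.1.ne', hω, Int.floor_add_fract]

lemma one_le_cfOmega (ht : ∀ n, gaussMap^[n] x ∈ Ioo 0 1) (n : ℕ) : 1 ≤ cfOmega x n := by
  have h := one_div_iterate_gaussMap ht n
  have h1 : 1 < 1 / gaussMap^[n] x := one_lt_one_div (ht n).1 (ht n).2
  have h2 := (ht (n + 1)).2
  exact_mod_cast (show (0 : ℝ) < cfOmega x n by linarith)

lemma cfQ_succ_succ (n : ℕ) : cfQ x (n + 2) = cfOmega x (n + 1) * cfQ x (n + 1) + cfQ x n := rfl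

lemma cfQ_pos (hω : ∀ n, 1 ≤ cfOmega x n) (n : ℕ) : 0 < cfQ x n := by
  induction n with
  | zero => exact Nat.one_pos
  | succ n ih => exact Nat.add_pos_left (Nat.mul_pos (hω n) ih) _

lemma cfQPair_fst_le (hω : ∀ n, 1 ≤ cfOmega x n) (n : ℕ) : (cfQPair x n).1 ≤ cfQ x n := by
  cases n with
  | zero => exact Nat.zero_le _
  | succ n => exact (Nat.le_mul_of_pos_left _ (hω n)).trans (Nat.le_add_right _ _)

lemma cfQ_mono (hω : ∀ n, 1 ≤ cfOmega x n) : Monotone (cfQ x) :=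
  monotone_nat_of_le_succ fun n => cfQPair_fst_le hω (n + 1)

lemma cfQ_succ_strictMono (hω : ∀ n, 1 ≤ cfOmega x n) : StrictMono fun n => cfQ x (n + 1) :=
  strictMono_nat_of_lt_succ fun n => by
    rw [cfQ_succ_succ]
    have := cfQ_pos hω n
    have := Nat.le_mul_of_pos_left (cfQ x (n + 1)) (hω (n + 1))
    omega

lemma le_cfQ (hω : ∀ n, 1 ≤ cfOmega x n) : ∀ n, n ≤ cfQ x n
  | 0 => Nat.zero_le _
  | 1 => cfQ_pos hω 1
  | n + 2 => (le_cfQ hω (n + 1)).trans_lt (cfQ_succ_strictMono hω n.lt_succ_self)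

lemma exists_cfQ_le_lt (hω : ∀ n, 1 ≤ cfOmega x n) {b : ℕ} (hb : 1 ≤ b) :
    ∃ n, cfQ x n ≤ b ∧ b < cfQ x (n + 1) := by
  classical
  have hex : ∃ n, b < cfQ x (n + 1) := ⟨b, le_cfQ hω (b + 1)⟩
  refine ⟨Nat.find hex, ?_, Nat.find_spec hex⟩
  cases h : Nat.find hex with
  | zero => exact hb
  | succ m => exact not_lt.1 (Nat.find_min hex (h ▸ m.lt_succ_self))

lemma cfOmega_le_cfQ_succ (hω : ∀ n, 1 ≤ cfOmega x n) (n : ℕ) : cfOmega x n ≤ cfQ x (n + 1) :=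
  (Nat.le_mul_of_pos_right _ (cfQ_pos hω n)).trans (Nat.le_add_right _ _)

lemma cfQ_le_prod (hω : ∀ n, 1 ≤ cfOmega x n) (n : ℕ) :
    cfQ x n ≤ ∏ j ∈ Finset.range n, (1 + cfOmega x j) := by
  induction n with
  | zero => exact le_rfl
  | succ n ih =>
    rw [Finset.prod_range_succ]
    calc cfQ x (n + 1) = cfOmega x n * cfQ x n + (cfQPair x n).1 := rfl
      _ ≤ cfQ x n * (1 + cfOmega x n) := by nlinarith [cfQPair_fst_le hω n]
      _ ≤ _ := Nat.mul_le_mul_right _ ih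

lemma prod_le_two_mul_cfQ_mul_cfQ_succ (hω : ∀ n, 1 ≤ cfOmega x n) (n : ℕ) :
    ∏ j ∈ Finset.range (n + 1), (1 + cfOmega x j) ≤ 2 * cfQ x n * cfQ x (n + 1) := by
  induction n with
  | zero =>
    have h : cfQ x 1 = cfOmega x 0 := by simp [cfQ, cfQPair]
    simp only [zero_add, Finset.prod_range_one, h]
    have := hω 0
    change 1 + cfOmega x 0 ≤ 2 * 1 * cfOmega x 0
    omega
  | succ n ih =>
    rw [Finset.prod_range_succ, cfQ_succ_succ]
    -- `(1 + ω_{n+1}) q_n ≤ q_{n+2}` since `q_n ≤ q_{n+1}`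
    have hq := cfQ_mono hω n.le_succ
    calc _ ≤ 2 * cfQ x n * cfQ x (n + 1) * (1 + cfOmega x (n + 1)) := Nat.mul_le_mul_right _ ih
      _ ≤ _ := by nlinarith [Nat.zero_le (cfOmega x (n + 1) * cfQ x (n + 1))]

lemma cfPPair_det (n : ℕ) :
    ((cfPPair x n).1 : ℤ) * (cfQPair x n).2 - (cfPPair x n).2 * (cfQPair x n).1 = (-1) ^ n := by
  induction n with
  | zero => simp [cfPPair, cfQPair]
  | succ n ih =>
    simp only [cfPPair, cfQPair, Nat.cast_add, Nat.cast_mul, pow_succ]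
    linear_combination -ih

lemma cfP_coprime_cfQ (n : ℕ) : Nat.Coprime (cfP x n) (cfQ x n) := by
  rw [← Nat.isCoprime_iff_coprime, cfP, cfQ]
  refine ⟨-(-1) ^ n * (cfQPair x n).1, (-1) ^ n * (cfPPair x n).1, ?_⟩
  have hsq : ((-1 : ℤ) ^ n) ^ 2 = 1 := by rw [← pow_mul, pow_mul', neg_one_sq, one_pow]
  linear_combination (-1 : ℤ) ^ n * cfPPair_det n + hsq

noncomputable def cfConvergent (x : ℝ) (n : ℕ) : ℚ := (cfP x n : ℚ) / cfQ x n

lemma cast_cfConvergent (n : ℕ) : (cfConvergent x n : ℝ) = (cfP x n : ℝ) / cfQ x n := by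
  simp [cfConvergent]

lemma cfConvergent_den (hω : ∀ n, 1 ≤ cfOmega x n) (n : ℕ) :
    (cfConvergent x n).den = cfQ x n := by
  have h := Rat.den_div_eq_of_coprime (a := cfP x n) (b := cfQ x n)
    (by exact_mod_cast cfQ_pos hω n) (cfP_coprime_cfQ n)
  rw [Int.cast_natCast, Int.cast_natCast] at h
  exact_mod_cast h

lemma mul_cfQPair_eq_cfPPair (ht : ∀ n, gaussMap^[n] x ∈ Ioo 0 1) (n : ℕ) :
    x * ((cfQPair x n).2 + gaussMap^[n] x * (cfQPair x n).1)
      = (cfPPair x n).2 + gaussMap^[n] x * (cfPPair x n).1 := by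
  induction n with
  | zero => simp [cfQPair, cfPPair]
  | succ n ih =>
    have hrec := one_div_iterate_gaussMap ht n
    rw [div_eq_iff (ht n).1.ne'] at hrec
    apply mul_left_cancel₀ (ht n).1.ne'
    simp only [cfPPair, cfQPair, Nat.cast_add, Nat.cast_mul]
    linear_combination ih - (x * (cfQPair x n).2 - (cfPPair x n).2) * hrec

lemma sub_cfConvergent (ht : ∀ n, gaussMap^[n] x ∈ Ioo 0 1) (n : ℕ) :
    x - cfConvergent x n
      = (-1) ^ n / (cfQ x n * (cfQ x (n + 1) + gaussMap^[n + 1] x * cfQ x n)) := by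
  set t := gaussMap^[n] x
  set q' : ℝ := ((cfQPair x n).1 : ℝ)
  set p' : ℝ := ((cfPPair x n).1 : ℝ)
  have hq : (cfQ x n : ℝ) ≠ 0 := by exact_mod_cast (cfQ_pos (one_le_cfOmega ht) n).ne'
  have hs := (ht (n + 1)).1
  have hcomplete : x * (cfQ x n + t * q') = cfP x n + t * p' := mul_cfQPair_eq_cfPPair ht n
  have hdet : p' * cfQ x n - cfP x n * q' = (-1) ^ n := by
    have h := congrArg (Int.cast : ℤ → ℝ) (cfPPair_det (x := x) n)
    push_cast at h
    exact h
  have hrec := one_div_iterate_gaussMap ht n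
  rw [div_eq_iff (ht n).1.ne'] at hrec
  have hQ : (cfQ x (n + 1) : ℝ) = cfOmega x n * cfQ x n + q' := by
    simp [q', cfQ, cfQPair]
  rw [cast_cfConvergent, eq_div_iff (by positivity), hQ, ← mul_left_inj' (ht n).1.ne']
  field_simp
  linear_combination (cfQ x n : ℝ) * hcomplete + t * hdet
    - (x * cfQ x n - cfP x n) * cfQ x n * hrec

lemma abs_sub_cfConvergent (ht : ∀ n, gaussMap^[n] x ∈ Ioo 0 1) (n : ℕ) :
    |x - cfConvergent x n| = 1 / (cfQ x n * (cfQ x (n + 1) + gaussMap^[n + 1] x * cfQ x n)) := by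
  have hq : (0 : ℝ) < cfQ x n := by exact_mod_cast cfQ_pos (one_le_cfOmega ht) n
  have hs := (ht (n + 1)).1
  rw [sub_cfConvergent ht, abs_div, abs_pow, abs_neg, abs_one, one_pow, abs_of_pos (by positivity)]

lemma abs_sub_cfConvergent_lt (ht : ∀ n, gaussMap^[n] x ∈ Ioo 0 1) (n : ℕ) :
    |x - cfConvergent x n| < 1 / (cfQ x n * cfQ x (n + 1)) := by
  have hω := one_le_cfOmega ht
  have hq : (0 : ℝ) < cfQ x n := by exact_mod_cast cfQ_pos hω n
  have hQ : (0 : ℝ) < cfQ x (n + 1) := by exact_mod_cast cfQ_pos hω (n + 1)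
  have hs := (ht (n + 1)).1
  rw [abs_sub_cfConvergent ht]
  gcongr
  exact lt_add_of_pos_right _ (by positivity)

lemma one_div_two_mul_lt_abs_sub_cfConvergent (ht : ∀ n, gaussMap^[n] x ∈ Ioo 0 1) (n : ℕ) :
    1 / (2 * cfQ x n * cfQ x (n + 1)) < |x - cfConvergent x n| := by
  have hω := one_le_cfOmega ht
  have hq : (0 : ℝ) < cfQ x n := by exact_mod_cast cfQ_pos hω n
  have hqQ : (cfQ x n : ℝ) ≤ cfQ x (n + 1) := by exact_mod_cast cfQ_mono hω n.le_succ
  have hs := ht (n + 1)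
  rw [abs_sub_cfConvergent ht, mul_assoc, mul_left_comm, two_mul]
  gcongr 1 / (_ * ?_)
  · exact mul_pos hq (add_pos_of_pos_of_nonneg (hq.trans_le hqQ) (mul_nonneg hs.1.le hq.le))
  · nlinarith [hs.1, hs.2]

noncomputable def cfLogSum (x : ℝ) (n : ℕ) : ℝ :=
  ∑ j ∈ Finset.range n, Real.log (1 + (cfOmega x j : ℝ))

lemma cfLogSum_eq_log_prod (n : ℕ) :
    cfLogSum x n = Real.log ((∏ j ∈ Finset.range n, (1 + cfOmega x j) : ℕ) : ℝ) := by
  push_cast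
  exact (Real.log_prod fun j _ => by positivity).symm

lemma log_cfQ_le_cfLogSum (hω : ∀ n, 1 ≤ cfOmega x n) (n : ℕ) :
    Real.log (cfQ x n) ≤ cfLogSum x n := by
  rw [cfLogSum_eq_log_prod]
  exact Real.log_le_log (by exact_mod_cast cfQ_pos hω n) (by exact_mod_cast cfQ_le_prod hω n)

lemma cfLogSum_le (hω : ∀ n, 1 ≤ cfOmega x n) (n : ℕ) :
    cfLogSum x n ≤ 2 * Real.log (cfQ x n) + Real.log 2 := by
  have hlog2 : 0 ≤ Real.log 2 := Real.log_nonneg one_le_two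
  cases n with
  | zero => simpa [cfLogSum, cfQ, cfQPair] using hlog2
  | succ n =>
    have hq : (0 : ℝ) < cfQ x n := by exact_mod_cast cfQ_pos hω n
    have hQ : (0 : ℝ) < cfQ x (n + 1) := by exact_mod_cast cfQ_pos hω (n + 1)
    have hqQ : Real.log (cfQ x n) ≤ Real.log (cfQ x (n + 1)) :=
      Real.log_le_log hq (by exact_mod_cast cfQ_mono hω n.le_succ)
    have hprod := Real.log_le_log (by exact_mod_cast Finset.prod_pos fun j _ => by omega)
      (Nat.cast_le (α := ℝ) |>.2 (prod_le_two_mul_cfQ_mul_cfQ_succ hω n))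
    rw [← cfLogSum_eq_log_prod] at hprod
    push_cast at hprod
    rw [Real.log_mul (by positivity) hQ.ne', Real.log_mul (by positivity) hq.ne'] at hprod
    linarith

lemma abs_sub_cfConvergent_le_rpow (ht : ∀ n, gaussMap^[n] x ∈ Ioo 0 1) {c : ℝ} (hc : 0 ≤ c)
    {n : ℕ} (hn : c * cfLogSum x n ≤ Real.log (1 + cfOmega x n)) (hq : 2 ≤ cfQ x n) :
    |x - cfConvergent x n| ≤ (cfQ x n : ℝ) ^ (-c) := by
  have hω := one_le_cfOmega ht
  have hq2 : (2 : ℝ) ≤ cfQ x n := by exact_mod_cast hq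
  have hω1 : (1 : ℝ) ≤ cfOmega x n := by exact_mod_cast hω n
  have hωQ : (cfOmega x n : ℝ) ≤ cfQ x (n + 1) := by exact_mod_cast cfOmega_le_cfQ_succ hω n
  have hpow : (cfQ x n : ℝ) ^ c ≤ 1 + cfOmega x n := by
    rw [← Real.log_le_log_iff (by positivity) (by positivity), Real.log_rpow (by positivity)]
    nlinarith [log_cfQ_le_cfLogSum hω n]
  rw [Real.rpow_neg (by positivity), ← one_div]
  refine (abs_sub_cfConvergent_lt ht n).le.trans (one_div_le_one_div_of_le (by positivity) ?_)
  nlinarith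

lemma infinite_setOf_abs_sub_le_rpow (ht : ∀ n, gaussMap^[n] x ∈ Ioo 0 1) {c : ℝ} (hc : 0 ≤ c)
    (h : {n : ℕ | c * cfLogSum x n ≤ Real.log (1 + cfOmega x n)}.Infinite) :
    {r : ℚ | |x - r| ≤ (r.den : ℝ) ^ (-c)}.Infinite := by
  have hω := one_le_cfOmega ht
  refine Set.infinite_of_injOn_mapsTo (f := cfConvergent x) ?_ ?_ (h.sdiff (Set.finite_Iio 2))
  · rintro m ⟨-, hm⟩ n ⟨-, hn⟩ hmn
    obtain ⟨m, rfl⟩ := Nat.exists_eq_add_of_le' (not_lt.1 hm)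
    obtain ⟨n, rfl⟩ := Nat.exists_eq_add_of_le' (not_lt.1 hn)
    have hden := congrArg Rat.den hmn
    rw [cfConvergent_den hω, cfConvergent_den hω] at hden
    simpa using (cfQ_succ_strictMono hω).injective hden
  · rintro n ⟨hn, hn2⟩
    have hq : 2 ≤ cfQ x n := (not_lt.1 hn2).trans (le_cfQ hω n)
    simpa [cfConvergent_den hω] using abs_sub_cfConvergent_le_rpow ht hc hn hq

lemma exists_log_cfQ_succ_le (hω : ∀ n, 1 ≤ cfOmega x n) {c : ℝ} (hc : 0 ≤ c)
    (h : {n : ℕ | c * cfLogSum x n ≤ Real.log (1 + cfOmega x n)}.Finite) :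
    ∃ L, ∀ n, Real.log (cfQ x (n + 1)) ≤ 2 * (1 + c) * Real.log (cfQ x n) + L := by
  obtain ⟨N, hN⟩ := h.bddAbove
  have hlog_nonneg : ∀ n, 0 ≤ Real.log (cfQ x n) := fun n =>
    Real.log_nonneg (by exact_mod_cast cfQ_pos hω n)
  have hlog2 : 0 ≤ Real.log 2 := Real.log_nonneg one_le_two
  refine ⟨(1 + c) * Real.log 2 + Real.log (cfQ x (N + 1)), fun n => ?_⟩
  rcases le_or_gt n N with hn | hn
  · have hmono : Real.log (cfQ x (n + 1)) ≤ Real.log (cfQ x (N + 1)) :=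
      Real.log_le_log (by exact_mod_cast cfQ_pos hω _)
        (by exact_mod_cast cfQ_mono hω (Nat.succ_le_succ hn))
    nlinarith [hlog_nonneg n]
  · have hsmall : Real.log (1 + cfOmega x n) < c * cfLogSum x n :=
      lt_of_not_ge fun h' => hn.not_ge (hN h')
    have hsucc : cfLogSum x (n + 1) = cfLogSum x n + Real.log (1 + cfOmega x n) :=
      Finset.sum_range_succ _ n
    have := log_cfQ_le_cfLogSum hω (n + 1)
    have := cfLogSum_le hω n
    nlinarith [hlog_nonneg (N + 1)]

lemma one_div_le_abs_sub_rat (ht : ∀ n, gaussMap^[n] x ∈ Ioo 0 1) {n : ℕ} (r : ℚ)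
    (hr : r.den < cfQ x (n + 1)) :
    1 / (2 * r.den * cfQ x n * cfQ x (n + 1)) ≤ |x - r| := by
  have hω := one_le_cfOmega ht
  have hb : (1 : ℝ) ≤ r.den := by exact_mod_cast r.pos
  have hq : (0 : ℝ) < cfQ x n := by exact_mod_cast cfQ_pos hω n
  have hQ : (r.den : ℝ) + 1 ≤ cfQ x (n + 1) := by exact_mod_cast hr
  have hQpos : (0 : ℝ) < cfQ x (n + 1) := by linarith
  rcases eq_or_ne r (cfConvergent x n) with rfl | hne
  · refine le_trans ?_ (one_div_two_mul_lt_abs_sub_cfConvergent ht n).le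
    gcongr
    linarith
  · have hsep := Rat.one_div_den_mul_den_le_abs_sub hne
    rw [cfConvergent_den hω] at hsep
    have hconv := abs_sub_cfConvergent_lt ht n
    have htri := abs_sub_le (r : ℝ) x (cfConvergent x n)
    rw [abs_sub_comm (r : ℝ) x] at htri
    have key : (1 : ℝ) / (2 * r.den * cfQ x n * cfQ x (n + 1))
        ≤ 1 / (r.den * cfQ x n) - 1 / (cfQ x n * cfQ x (n + 1)) := by
      rw [div_sub_div _ _ (by positivity) (by positivity), div_le_div_iff₀ (by positivity)
        (by positivity)]
      have hpos : 0 < (r.den : ℝ) * cfQ x n * cfQ x n * cfQ x (n + 1) := by positivity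
      nlinarith [mul_nonneg hpos.le (by linarith : (0 : ℝ) ≤ cfQ x (n + 1) - r.den - 1)]
    linarith

lemma log_den_le_of_abs_sub_le (ht : ∀ n, gaussMap^[n] x ∈ Ioo 0 1) {K L : ℝ} (hK : 0 ≤ K)
    (hgrowth : ∀ n, Real.log (cfQ x (n + 1)) ≤ K * Real.log (cfQ x n) + L) {r : ℚ}
    (hr : |x - r| ≤ (r.den : ℝ) ^ (-(K + 3))) :
    Real.log r.den ≤ Real.log 2 + L := by
  have hω := one_le_cfOmega ht
  have hb : (0 : ℝ) < r.den := by exact_mod_cast r.pos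
  obtain ⟨n, hqn, hbQ⟩ := exists_cfQ_le_lt hω r.pos
  have hq : (0 : ℝ) < cfQ x n := by exact_mod_cast cfQ_pos hω n
  have hQ : (0 : ℝ) < cfQ x (n + 1) := by exact_mod_cast cfQ_pos hω (n + 1)
  have hlog := Real.log_le_log (by positivity) ((one_div_le_abs_sub_rat ht r hbQ).trans hr)
  rw [Real.log_rpow hb, one_div, Real.log_inv, Real.log_mul (by positivity) hQ.ne',
    Real.log_mul (by positivity) hq.ne', Real.log_mul two_ne_zero hb.ne'] at hlog
  have hqb : Real.log (cfQ x n) ≤ Real.log r.den := Real.log_le_log hq (by exact_mod_cast hqn)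
  nlinarith [hgrowth n, mul_le_mul_of_nonneg_left hqb hK]

lemma finite_setOf_abs_sub_le_rpow (ht : ∀ n, gaussMap^[n] x ∈ Ioo 0 1) {c : ℝ} (hc : 0 ≤ c)
    (h : {n : ℕ | c * cfLogSum x n ≤ Real.log (1 + cfOmega x n)}.Finite) :
    {r : ℚ | |x - r| ≤ (r.den : ℝ) ^ (-(2 * (1 + c) + 3))}.Finite := by
  obtain ⟨L, hL⟩ := exists_log_cfQ_succ_le (one_le_cfOmega ht) hc h
  refine (Rat.finite_setOf_den_le_abs_le ⌈Real.exp (Real.log 2 + L)⌉₊ (|x| + 1)).subset ?_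
  intro r hr
  have hb : (1 : ℝ) ≤ r.den := by exact_mod_cast r.pos
  have hlog := log_den_le_of_abs_sub_le ht (by positivity) hL hr
  refine ⟨?_, ?_⟩
  · rw [← Nat.cast_le (α := ℝ)]
    exact (Real.log_le_iff_le_exp (by positivity)).1 hlog |>.trans (Nat.le_ceil _)
  · have hr1 : |x - r| ≤ 1 := hr.trans (Real.rpow_le_one_of_one_le_of_nonpos hb (by linarith))
    calc |(r : ℝ)| = |x - (x - r)| := by rw [sub_sub_cancel]
      _ ≤ |x| + |x - r| := abs_sub _ _
      _ ≤ |x| + 1 := by linarith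

end ContinuedFraction

theorem stmt6 (x : ℝ) (hx : x ∈ Icc (0:ℝ) 1) (hirr : Irrational x) :
    (∀ c : ℝ, 0 < c → {r : ℚ | |x - (r : ℝ)| ≤ (r.den : ℝ) ^ (-c)}.Infinite) ↔
      (∀ c : ℝ, 0 < c →
        {n : ℕ | c * ∑ j ∈ Finset.range n, Real.log (1 + (cfOmega x j : ℝ))
          ≤ Real.log (1 + (cfOmega x n : ℝ))}.Infinite) := by
  have ht := iterate_gaussMap_mem_Ioo
    ⟨hx.1.lt_of_ne hirr.ne_zero.symm, hx.2.lt_of_ne hirr.ne_one⟩ hirr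
  constructor
  · intro H c hc hfin
    exact H _ (by positivity) (finite_setOf_abs_sub_le_rpow ht hc.le hfin)
  · intro H c hc
    exact infinite_setOf_abs_sub_le_rpow ht hc.le (H c hc)
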